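/- arXiv:0906.5290 — 2 statements merged into one kernel-verified Lean document; each statement's English description precedes it below -/
import Mathlib

section
/- With the notation of the previous setup (v ∈ L¹ nonnegative, f(t) = ∫_0^t v, g(s) = inf{t : f(t) = s}), if g is discontinuous at s₀ ∈ (0,L), then f⁻¹(s₀) is a nondegenerate closed interval [t₀, t₁] and ∫_{t₀}^{t} v(τ) dτ = 0 for all t ∈ [t₀, t₁]; consequently any curve q with metric speed bounded by v is constant on [t₀, t₁], so q ∘ g is continuous at s₀. -/
open Real Set MeasureTheory Filter Topology

/-!
Since `v ≥ 0`, `f` is continuous and nondecreasing, so each level set `f⁻¹(s)` is a compact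
interval and `g(s)` is its left endpoint. For `t ∈ [0,T]` and `s ∈ [0,L]` one has
`t < g(s) ↔ f(t) < s`, which makes `g` continuous at every `s₀` whose level set is a single
point; hence a discontinuity forces `f⁻¹(s₀) = [t₀, t₁]` with `t₀ < t₁`, and `f` is constant
there. The speed bound gives `d(q(a), q(b)) ≤ |f(b) - f(a)|`, so `q` is constant on `[t₀, t₁]`
and `q ∘ g` is 1-Lipschitz because `f ∘ g = id`.
-/

section Primitive

variable {v : ℝ → ℝ} {a b x y : ℝ}

theorem integral_eq_primitive_sub (hv : IntegrableOn v (Icc a b)) (hx : x ∈ Icc a b)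
    (hy : y ∈ Icc a b) :
    ∫ τ in x..y, v τ = (∫ τ in a..y, v τ) - ∫ τ in a..x, v τ :=
  have ha : a ∈ Icc a b := left_mem_Icc.2 (hx.1.trans hx.2)
  (intervalIntegral.integral_interval_sub_left
    (hv.mono_set (uIcc_subset_Icc ha hy)).intervalIntegrable
    (hv.mono_set (uIcc_subset_Icc ha hx)).intervalIntegrable).symm

theorem monotoneOn_primitive (hv : IntegrableOn v (Icc a b)) (hvpos : ∀ t ∈ Icc a b, 0 ≤ v t) :
    MonotoneOn (fun t => ∫ τ in a..t, v τ) (Icc a b) := fun _ hx _ hy hxy =>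
  sub_nonneg.1 <| integral_eq_primitive_sub hv hx hy ▸
    intervalIntegral.integral_nonneg hxy fun u hu => hvpos u ⟨hx.1.trans hu.1, hu.2.trans hy.2⟩

theorem dist_le_dist_primitive {M : Type*} [PseudoMetricSpace M] {q : ℝ → M}
    (hv : IntegrableOn v (Icc a b))
    (hq : ∀ t₀ t₁, a ≤ t₀ → t₀ ≤ t₁ → t₁ ≤ b → dist (q t₀) (q t₁) ≤ ∫ τ in t₀..t₁, v τ)
    (hx : x ∈ Icc a b) (hy : y ∈ Icc a b) :
    dist (q x) (q y) ≤ dist (∫ τ in a..x, v τ) (∫ τ in a..y, v τ) := by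
  wlog hxy : x ≤ y generalizing x y
  · rw [dist_comm, dist_comm (∫ τ in a..x, v τ)]
    exact this hy hx (le_of_not_ge hxy)
  calc dist (q x) (q y) ≤ ∫ τ in x..y, v τ := hq x y hx.1 hxy hy.2
    _ = (∫ τ in a..y, v τ) - ∫ τ in a..x, v τ := integral_eq_primitive_sub hv hx hy
    _ ≤ dist (∫ τ in a..x, v τ) (∫ τ in a..y, v τ) := by
      rw [Real.dist_eq, abs_sub_comm]
      exact le_abs_self _

end Primitive

theorem MonotoneOn.ordConnected_levelSet {α β : Type*} [Preorder α] [PartialOrder β]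
    {f : α → β} {s : Set α} (hf : MonotoneOn f s) (hs : s.OrdConnected) (c : β) :
    {t | t ∈ s ∧ f t = c}.OrdConnected :=
  ⟨fun _ hx _ hy _ ht =>
    have hts := hs.out hx.1 hy.1 ht
    ⟨hts, le_antisymm (hy.2 ▸ hf hts hy.1 ht.2) (hx.2 ▸ hf hx.1 hts ht.1)⟩⟩

section LevelSet

variable {f : ℝ → ℝ} {a b c x : ℝ}

theorem isCompact_levelSet (hf : ContinuousOn f (Icc a b)) (c : ℝ) :
    IsCompact {t | t ∈ Icc a b ∧ f t = c} :=
  isCompact_Icc.of_isClosed_subset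
    (hf.preimage_isClosed_of_isClosed isClosed_Icc isClosed_singleton) fun _ ht => ht.1

theorem levelSet_nonempty (hab : a ≤ b) (hf : ContinuousOn f (Icc a b))
    (hc : c ∈ Icc (f a) (f b)) : {t | t ∈ Icc a b ∧ f t = c}.Nonempty :=
  let ⟨t, ht, hft⟩ := intermediate_value_Icc hab hf hc
  ⟨t, ht, hft⟩

theorem sInf_levelSet_mem (hab : a ≤ b) (hf : ContinuousOn f (Icc a b))
    (hc : c ∈ Icc (f a) (f b)) :
    sInf {t | t ∈ Icc a b ∧ f t = c} ∈ {t | t ∈ Icc a b ∧ f t = c} :=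
  (isCompact_levelSet hf c).sInf_mem (levelSet_nonempty hab hf hc)

theorem levelSet_eq_Icc (hab : a ≤ b) (hmono : MonotoneOn f (Icc a b))
    (hf : ContinuousOn f (Icc a b)) (hc : c ∈ Icc (f a) (f b)) :
    {t | t ∈ Icc a b ∧ f t = c} =
      Icc (sInf {t | t ∈ Icc a b ∧ f t = c}) (sSup {t | t ∈ Icc a b ∧ f t = c}) :=
  eq_Icc_of_connected_compact
    ⟨levelSet_nonempty hab hf hc, (hmono.ordConnected_levelSet ordConnected_Icc c).isPreconnected⟩
    (isCompact_levelSet hf c)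

theorem lt_sInf_levelSet_iff (hab : a ≤ b) (hmono : MonotoneOn f (Icc a b))
    (hf : ContinuousOn f (Icc a b)) (hx : x ∈ Icc a b) (hc : c ∈ Icc (f a) (f b)) :
    x < sInf {t | t ∈ Icc a b ∧ f t = c} ↔ f x < c := by
  obtain ⟨hinf, hfinf⟩ := sInf_levelSet_mem hab hf hc
  refine ⟨fun hlt => ?_, fun hlt => hmono.reflect_lt hx hinf (by rwa [hfinf])⟩
  by_contra! hle
  obtain ⟨y, hy, hfy⟩ := intermediate_value_Icc hx.1 (hf.mono (Icc_subset_Icc_right hx.2))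
    ⟨hc.1, hle⟩
  have hyS : y ∈ {t | t ∈ Icc a b ∧ f t = c} := ⟨⟨hy.1, hy.2.trans hx.2⟩, hfy⟩
  exact (csInf_le (isCompact_levelSet hf c).bddBelow hyS |>.trans hy.2).not_gt hlt

theorem continuousAt_sInf_levelSet (hab : a ≤ b) (hmono : MonotoneOn f (Icc a b))
    (hf : ContinuousOn f (Icc a b)) (hc : c ∈ Ioo (f a) (f b))
    (hsub : {t | t ∈ Icc a b ∧ f t = c}.Subsingleton) :
    ContinuousAt (fun s => sInf {t | t ∈ Icc a b ∧ f t = s}) c := by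
  have hnhds : Icc (f a) (f b) ∈ 𝓝 c := Icc_mem_nhds hc.1 hc.2
  obtain ⟨hinf, hfinf⟩ := sInf_levelSet_mem hab hf (Ioo_subset_Icc_self hc)
  refine tendsto_order.2 ⟨fun l hl => ?_, fun u hu => ?_⟩
  · have ha : a < sInf {t | t ∈ Icc a b ∧ f t = c} :=
      (lt_sInf_levelSet_iff hab hmono hf (left_mem_Icc.2 hab) (Ioo_subset_Icc_self hc)).2 hc.1
    have hx : max l a ∈ Icc a b := ⟨le_max_right _ _, (max_lt hl ha).le.trans hinf.2⟩
    have hfx : f (max l a) < c :=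
      (lt_sInf_levelSet_iff hab hmono hf hx (Ioo_subset_Icc_self hc)).1 (max_lt hl ha)
    filter_upwards [hnhds, eventually_gt_nhds hfx] with s hs hxs
    exact (le_max_left _ _).trans_lt ((lt_sInf_levelSet_iff hab hmono hf hx hs).2 hxs)
  · have hlt : sInf {t | t ∈ Icc a b ∧ f t = c} < min u b :=
      lt_min hu (hmono.reflect_lt hinf (right_mem_Icc.2 hab) (hfinf.symm ▸ hc.2))
    have hx : min u b ∈ Icc a b := ⟨hinf.1.trans hlt.le, min_le_right _ _⟩
    have hfx : c < f (min u b) :=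
      (hfinf ▸ hmono hinf hx hlt.le).lt_of_ne fun h => hlt.ne (hsub ⟨hinf, hfinf⟩ ⟨hx, h.symm⟩)
    filter_upwards [hnhds, eventually_lt_nhds hfx] with s hs hsx
    obtain ⟨hinfs, hfinfs⟩ := sInf_levelSet_mem hab hf hs
    exact (hmono.reflect_lt hinfs hx (hfinfs.symm ▸ hsx)).trans_le (min_le_left _ _)

theorem lipschitzOnWith_comp_sInf_levelSet {M : Type*} [PseudoMetricSpace M] {q : ℝ → M}
    (hab : a ≤ b) (hf : ContinuousOn f (Icc a b))
    (hq : ∀ x ∈ Icc a b, ∀ y ∈ Icc a b, dist (q x) (q y) ≤ dist (f x) (f y)) :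
    LipschitzOnWith 1 (fun s => q (sInf {t | t ∈ Icc a b ∧ f t = s})) (Icc (f a) (f b)) :=
  LipschitzOnWith.mk_one fun s hs s' hs' => by
    obtain ⟨hinf, hfinf⟩ := sInf_levelSet_mem hab hf hs
    obtain ⟨hinf', hfinf'⟩ := sInf_levelSet_mem hab hf hs'
    simpa only [hfinf, hfinf'] using hq _ hinf _ hinf'

end LevelSet

/-- If g (the generalized inverse of f(t) = ∫₀ᵗ v) is discontinuous at s₀ ∈ (0,L),
then the level set f⁻¹(s₀) is a nondegenerate interval [t₀,t₁] on which v has zero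
integral; any curve with metric speed bounded by v is constant there, and q ∘ g is
continuous at s₀. -/
theorem stmt_9 {M : Type*} [MetricSpace M] (T L : ℝ) (hT : 0 ≤ T)
    (v : ℝ → ℝ) (hv : IntegrableOn v (Icc 0 T))
    (hvpos : ∀ t ∈ Icc 0 T, 0 ≤ v t)
    (f : ℝ → ℝ) (hf : ∀ t, f t = ∫ τ in (0:ℝ)..t, v τ)
    (hL : f T = L)
    (g : ℝ → ℝ) (hg : ∀ s, g s = sInf {t | t ∈ Icc 0 T ∧ f t = s})
    (q : ℝ → M)
    (hq : ∀ t₀ t₁, 0 ≤ t₀ → t₀ ≤ t₁ → t₁ ≤ T →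
      dist (q t₀) (q t₁) ≤ ∫ τ in t₀..t₁, v τ)
    (s₀ : ℝ) (hs₀ : s₀ ∈ Ioo 0 L)
    (hdisc : ¬ ContinuousAt g s₀) :
    (∃ t₀ t₁, t₀ < t₁ ∧ {t | t ∈ Icc 0 T ∧ f t = s₀} = Icc t₀ t₁ ∧
      (∀ t ∈ Icc t₀ t₁, (∫ τ in t₀..t, v τ) = 0) ∧
      (∀ t ∈ Icc t₀ t₁, q t = q t₀)) ∧
    ContinuousAt (fun s => q (g s)) s₀ := by
  have hfv : f = fun t => ∫ τ in (0:ℝ)..t, v τ := funext hf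
  have hmono : MonotoneOn f (Icc 0 T) := hfv ▸ monotoneOn_primitive hv hvpos
  have hcont : ContinuousOn f (Icc 0 T) :=
    hfv ▸ (intervalIntegral.continuousOn_primitive hv).congr fun x hx => intervalIntegral.integral_of_le hx.1
  have hqf : ∀ x ∈ Icc 0 T, ∀ y ∈ Icc 0 T, dist (q x) (q y) ≤ dist (f x) (f y) :=
    hfv ▸ fun x hx y hy => dist_le_dist_primitive hv hq hx hy
  have hs₀' : s₀ ∈ Ioo (f 0) (f T) := by rwa [hL, hf 0, intervalIntegral.integral_same]
  obtain rfl : g = fun s => sInf {t | t ∈ Icc 0 T ∧ f t = s} := funext hg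
  set S := {t | t ∈ Icc 0 T ∧ f t = s₀}
  have hS : S = Icc (sInf S) (sSup S) := levelSet_eq_Icc hT hmono hcont (Ioo_subset_Icc_self hs₀')
  have hlt : sInf S < sSup S := by
    by_contra hle
    exact hdisc <| continuousAt_sInf_levelSet hT hmono hcont hs₀'
      ((subsingleton_Icc_of_ge (not_lt.1 hle)).anti hS.le)
  have hmemS : ∀ t ∈ Icc (sInf S) (sSup S), t ∈ Icc 0 T ∧ f t = f (sInf S) := fun t ht =>
    ⟨(hS.ge ht).1, (hS.ge ht).2.trans (hS.ge (left_mem_Icc.2 hlt.le)).2.symm⟩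
  obtain ⟨ht₀, -⟩ := hmemS _ (left_mem_Icc.2 hlt.le)
  refine ⟨⟨sInf S, sSup S, hlt, hS, fun t ht => ?_, fun t ht => ?_⟩, ?_⟩
  · obtain ⟨ht, hft⟩ := hmemS t ht
    rw [integral_eq_primitive_sub hv ht₀ ht, ← hf, ← hf, hft, sub_self]
  · obtain ⟨ht, hft⟩ := hmemS t ht
    exact dist_le_zero.1 ((hqf t ht _ ht₀).trans (by rw [hft, dist_self]))
  · exact (lipschitzOnWith_comp_sInf_levelSet hT hcont hqf).continuousOn.continuousAt
      (Icc_mem_nhds hs₀'.1 hs₀'.2)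
end

section
/- Let V ⊆ ℝᵐ satisfy aV ⊆ V for all a ≥ 0, and consider trajectories of q' = Σᵢ uᵢ(t) Fᵢ(q) with u(t) ∈ V and cost C[q] = ∫_0^T √(Σᵢ uᵢ²) dt. If there exists a trajectory q̄ from q₀ to q₁ with L¹ controls and cost L, then there exists a trajectory from q₀ to q₁ with the same cost L, defined on [0,T], whose controls are in L^∞ with ‖u‖ ≤ L/T almost everywhere; moreover this trajectory is a reparametrization of q̄. -/
/-!
Let `ℓ(t) = ∫₀ᵗ |u|` be the accumulated cost and `c = L / T`. The generalized inverse
`ψ(s) = sup {t ∈ [0,T] | ℓ t ≤ c s}` satisfies `ℓ (ψ s) = c s`, hence is strictly increasing, and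
the sandwich `{s < ℓ(b)/c} ⊆ {ψ s ≤ b} ⊆ {s ≤ ℓ(b)/c}` shows that `ψ` pushes `c · ds` on `(0, t]`
forward to `|u(τ)| dτ` on `(0, ψ t]`. Hence `q ∘ ψ` is driven by the control
`c u(ψ s) / |u(ψ s)|`, which lies in the cone `V`, has norm at most `c`, and has norm exactly `c`
almost everywhere because `{|u| = 0}` is null for `|u| dτ`.
-/

open Real Set MeasureTheory

noncomputable def upperInverse (f : ℝ → ℝ) (a b y : ℝ) : ℝ :=
  sSup (Icc a b ∩ f ⁻¹' Iic y)

section UpperInverse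

variable {f : ℝ → ℝ} {a b y : ℝ}

theorem upperInverse_mem (hab : a ≤ b) (hf : ContinuousOn f (Icc a b)) (hy : f a ≤ y) :
    upperInverse f a b y ∈ Icc a b ∩ f ⁻¹' Iic y :=
  (isCompact_Icc.of_isClosed_subset (hf.preimage_isClosed_of_isClosed isClosed_Icc isClosed_Iic)
    inter_subset_left).sSup_mem ⟨a, left_mem_Icc.2 hab, hy⟩

theorem apply_upperInverse (hab : a ≤ b) (hf : ContinuousOn f (Icc a b))
    (hmono : MonotoneOn f (Icc a b)) (hy : y ∈ Icc (f a) (f b)) :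
    f (upperInverse f a b y) = y := by
  obtain ⟨hmem, hle⟩ := upperInverse_mem hab hf hy.1
  obtain ⟨τ, hτ, rfl⟩ := intermediate_value_Icc hab hf hy
  exact le_antisymm hle <| hmono hτ hmem <|
    le_csSup (bddAbove_Icc.mono inter_subset_left) ⟨hτ, le_refl (f τ)⟩

theorem upperInverse_apply_right (hab : a ≤ b) : upperInverse f a b (f b) = b :=
  IsGreatest.csSup_eq ⟨⟨right_mem_Icc.2 hab, le_refl (f b)⟩, fun _ hx => hx.1.2⟩

end UpperInverse

theorem StrictMonoOn.of_monotone_comp {α β γ : Type*} [Preorder α] [LinearOrder β] [Preorder γ]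
    {f : β → γ} {φ : α → β} {s : Set α} (hf : Monotone f)
    (hfφ : StrictMonoOn (f ∘ φ) s) : StrictMonoOn φ s :=
  fun _ hx _ hy hxy => lt_of_not_ge fun h => (hfφ hx hy hxy).not_ge (hf h)

theorem StrictMonoOn.strictMono_add_sub_projIcc {g : ℝ → ℝ} {a b : ℝ} (hab : a ≤ b)
    (hg : StrictMonoOn g (Icc a b)) :
    StrictMono fun s => g (projIcc a b hab s) + (s - projIcc a b hab s) := by
  intro x y hxy
  have hproj : (projIcc a b hab x : ℝ) ≤ projIcc a b hab y := monotone_projIcc hab hxy.le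
  have hlip := abs_projIcc_sub_projIcc hab (c := y) (d := x)
  rw [abs_of_nonneg (sub_nonneg.2 hproj), abs_of_pos (sub_pos.2 hxy)] at hlip
  rcases hproj.lt_or_eq with hlt | heq
  · have := hg (projIcc a b hab x).2 (projIcc a b hab y).2 hlt
    dsimp only
    linarith
  · dsimp only
    rw [heq]
    linarith

theorem withDensity_ofReal_Ioc {ρ : ℝ → ℝ} (hρ0 : ∀ x, 0 ≤ ρ x) (hρ : Integrable ρ) (x : ℝ) :
    volume.withDensity (fun y => ENNReal.ofReal (ρ y)) (Ioc 0 x) =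
      ENNReal.ofReal (∫ y in 0..x, ρ y) := by
  rcases le_total 0 x with hx | hx
  · rw [withDensity_apply _ measurableSet_Ioc, intervalIntegral.integral_of_le hx,
      ofReal_integral_eq_lintegral_ofReal hρ.integrableOn (ae_of_all _ hρ0)]
  · rw [Ioc_eq_empty hx.not_gt, measure_empty, eq_comm, ENNReal.ofReal_eq_zero,
      intervalIntegral.integral_symm, neg_nonpos]
    exact intervalIntegral.integral_nonneg_of_forall hx hρ0

theorem restrict_Ioc_eq_ofReal_smul_map {F ψ : ℝ → ℝ} {ν : Measure ℝ} {c t : ℝ} (hc : 0 < c)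
    (ht : 0 ≤ t) (hψ : Measurable ψ) (hF : Monotone F)
    (hν : ∀ x, ν (Ioc 0 x) = ENNReal.ofReal (F x)) (hFψ : ∀ s ∈ Icc 0 t, F (ψ s) = c * s) :
    ν.restrict (Ioc 0 (ψ t)) = ENNReal.ofReal c • (volume.restrict (Ioc 0 t)).map ψ := by
  have : IsFiniteMeasure (ν.restrict (Ioc 0 (ψ t))) :=
    isFiniteMeasure_restrict.2 (hν _ ▸ ENNReal.ofReal_ne_top)
  refine Measure.ext_of_Iic _ _ fun b => ?_
  set r := F b / c
  have hlower : Ioo 0 (min t r) ⊆ ψ ⁻¹' Iic b ∩ Ioc 0 t := by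
    rintro s ⟨hs0, hs⟩
    have hsI : s ∈ Icc 0 t := ⟨hs0.le, (hs.trans_le (min_le_left _ _)).le⟩
    refine ⟨hF.reflect_lt ?_ |>.le, hs0, hsI.2⟩
    rw [hFψ s hsI, ← lt_div_iff₀' hc]
    exact hs.trans_le (min_le_right _ _)
  have hupper : ψ ⁻¹' Iic b ∩ Ioc 0 t ⊆ Ioc 0 (min t r) := by
    rintro s ⟨hsb, hs0, hst⟩
    refine ⟨hs0, le_min hst ?_⟩
    rw [le_div_iff₀' hc, ← hFψ s ⟨hs0.le, hst⟩]
    exact hF hsb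
  have hvol : volume (ψ ⁻¹' Iic b ∩ Ioc 0 t) = ENNReal.ofReal (min t r) := by
    refine le_antisymm ?_ ?_
    · simpa using measure_mono (μ := volume) hupper
    · simpa using measure_mono (μ := volume) hlower
  rw [Measure.restrict_apply measurableSet_Iic, inter_comm, Ioc_inter_Iic, hν, Measure.smul_apply,
    Measure.map_apply hψ measurableSet_Iic, Measure.restrict_apply (hψ measurableSet_Iic), hvol,
    smul_eq_mul, ← ENNReal.ofReal_mul hc.le, mul_min_of_nonneg _ _ hc.le, mul_div_cancel₀ _ hc.ne',
    hF.map_min, hFψ t ⟨ht, le_rfl⟩]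

section ChangeOfVariables

variable {E : Type*} [NormedAddCommGroup E] [NormedSpace ℝ E] {ρ ψ : ℝ → ℝ} {c t : ℝ}

theorem setIntegral_smul_eq_smul_setIntegral_comp (hρ0 : ∀ x, 0 ≤ ρ x) (hρ : AEMeasurable ρ)
    (hψ : MeasurableEmbedding ψ) (hc : 0 < c)
    (hmap : (volume.withDensity fun x => ENNReal.ofReal (ρ x)).restrict (Ioc 0 (ψ t)) =
      ENNReal.ofReal c • (volume.restrict (Ioc 0 t)).map ψ) (g : ℝ → E) :
    ∫ x in Ioc 0 (ψ t), ρ x • g x = c • ∫ s in Ioc 0 t, g (ψ s) := by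
  have hdens : ∫ x, g x ∂(volume.withDensity fun x => ENNReal.ofReal (ρ x)).restrict
      (Ioc 0 (ψ t)) = ∫ x in Ioc 0 (ψ t), ρ x • g x := by
    rw [restrict_withDensity measurableSet_Ioc]
    refine (integral_withDensity_eq_integral_smul₀ hρ.restrict.real_toNNReal g).trans ?_
    simp only [NNReal.smul_def, Real.coe_toNNReal _ (hρ0 _)]
  rw [← hdens, hmap, integral_smul_measure, hψ.integral_map, ENNReal.toReal_ofReal hc.le]

theorem ae_restrict_Ioc_apply_ne_zero (hρ : AEMeasurable ρ) (hψ : MeasurableEmbedding ψ)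
    (hc : 0 < c)
    (hmap : (volume.withDensity fun x => ENNReal.ofReal (ρ x)).restrict (Ioc 0 (ψ t)) =
      ENNReal.ofReal c • (volume.restrict (Ioc 0 t)).map ψ) :
    ∀ᵐ s ∂volume.restrict (Ioc 0 t), ρ (ψ s) ≠ 0 := by
  have hν : ∀ᵐ x ∂volume.withDensity (fun x => ENNReal.ofReal (ρ x)), ρ x ≠ 0 :=
    (ae_withDensity_iff' hρ.ennreal_ofReal).2 <| ae_of_all _ fun x hx h0 => hx (by simp [h0])
  have := ae_restrict_of_ae (s := Ioc 0 (ψ t)) hν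
  rw [hmap] at this
  exact hψ.ae_map_iff.1 <|
    (Measure.absolutelyContinuous_smul (ENNReal.ofReal_pos.2 hc).ne').ae_le this

end ChangeOfVariables

theorem exists_strictMono_comp_eq_mul {P : ℝ → ℝ} {T c : ℝ} (hT : 0 ≤ T) (hc : 0 < c)
    (hP : Monotone P) (hPc : ContinuousOn P (Icc 0 T)) (hP0 : P 0 = 0) (hPT : P T = c * T) :
    ∃ ψ : ℝ → ℝ, StrictMono ψ ∧ MapsTo ψ (Icc 0 T) (Icc 0 T) ∧
      (∀ s ∈ Icc 0 T, P (ψ s) = c * s) ∧ ψ T = T := by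
  have hmem : ∀ s ∈ Icc 0 T, c * s ∈ Icc (P 0) (P T) := fun s hs =>
    ⟨hP0.symm ▸ mul_nonneg hc.le hs.1, hPT.symm ▸ mul_le_mul_of_nonneg_left hs.2 hc.le⟩
  set φ := fun s => upperInverse P 0 T (c * s)
  have hPφ : ∀ s ∈ Icc 0 T, P (φ s) = c * s := fun s hs =>
    apply_upperInverse hT hPc (hP.monotoneOn _) (hmem s hs)
  have hφ : StrictMonoOn φ (Icc 0 T) := .of_monotone_comp hP fun x hx y hy hxy => by
    simpa [hPφ x hx, hPφ y hy] using mul_lt_mul_of_pos_left hxy hc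
  -- extending `φ` to a strictly monotone map of `ℝ` makes it a measurable embedding, along which
  -- integrals transport without any measurability assumption on the integrand
  set ψ := fun s => φ (projIcc 0 T hT s) + (s - projIcc 0 T hT s)
  have hψφ : EqOn ψ φ (Icc 0 T) := fun s hs => by simp [ψ, projIcc_of_mem hT hs]
  refine ⟨ψ, hφ.strictMono_add_sub_projIcc hT, fun s hs => ?_, fun s hs => ?_, ?_⟩
  · rw [hψφ hs]; exact (upperInverse_mem hT hPc (hmem s hs).1).1
  · rw [hψφ hs]; exact hPφ s hs
  rw [hψφ (right_mem_Icc.2 hT), show φ T = upperInverse P 0 T (P T) by rw [hPT]]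
  exact upperInverse_apply_right hT

theorem exists_strictMono_reparam {E : Type*} [NormedAddCommGroup E] [NormedSpace ℝ E]
    {ρ : ℝ → ℝ} {T c : ℝ} (hT : 0 ≤ T) (hc : 0 < c) (hρ0 : ∀ x ∈ Icc 0 T, 0 ≤ ρ x)
    (hρ : IntegrableOn ρ (Icc 0 T)) (hcT : ∫ x in 0..T, ρ x = c * T) :
    ∃ ψ : ℝ → ℝ, StrictMono ψ ∧ MapsTo ψ (Icc 0 T) (Icc 0 T) ∧
      (∀ s ∈ Icc 0 T, ∫ x in 0..ψ s, ρ x = c * s) ∧ ψ T = T ∧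
      (∀ t ∈ Icc 0 T, ∀ g : ℝ → E, ∫ x in Ioc 0 (ψ t), ρ x • g x = c • ∫ s in Ioc 0 t, g (ψ s)) ∧
      ∀ᵐ s ∂volume.restrict (Ioc 0 T), ρ (ψ s) ≠ 0 := by
  -- extending `ρ` by zero makes its primitive monotone and continuous on all of `ℝ`
  set G := (Icc 0 T).indicator ρ
  have hG0 : ∀ x, 0 ≤ G x := indicator_nonneg hρ0
  have hG : Integrable G := hρ.integrable_indicator measurableSet_Icc
  have hGρ : EqOn G ρ (Icc 0 T) := fun x hx => indicator_of_mem hx ρ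
  set P := fun x => ∫ y in 0..x, G y
  have hPmono : Monotone P := fun a b hab => by
    have := intervalIntegral.integral_nonneg_of_forall (μ := volume) hab hG0
    rw [← intervalIntegral.integral_interval_sub_left hG.intervalIntegrable
      hG.intervalIntegrable] at this
    exact sub_nonneg.1 this
  have hPρ : ∀ x ∈ Icc 0 T, P x = ∫ y in 0..x, ρ y := fun x hx =>
    intervalIntegral.integral_congr fun y hy => hGρ <| by
      rw [uIcc_of_le hx.1] at hy; exact ⟨hy.1, hy.2.trans hx.2⟩
  obtain ⟨ψ, hψ, hψmem, hPψ, hψT⟩ := exists_strictMono_comp_eq_mul hT hc hPmono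
    (intervalIntegral.continuous_primitive (fun _ _ => hG.intervalIntegrable) 0).continuousOn
    intervalIntegral.integral_same ((hPρ T (right_mem_Icc.2 hT)).trans hcT)
  have hψe : MeasurableEmbedding ψ := hψ.monotone.measurable.measurableEmbedding hψ.injective
  have hmap : ∀ t ∈ Icc 0 T, (volume.withDensity fun x => ENNReal.ofReal (G x)).restrict
      (Ioc 0 (ψ t)) = ENNReal.ofReal c • (volume.restrict (Ioc 0 t)).map ψ := fun t ht =>
    restrict_Ioc_eq_ofReal_smul_map hc ht.1 hψe.measurable hPmono (withDensity_ofReal_Ioc hG0 hG)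
      fun s hs => hPψ s ⟨hs.1, hs.2.trans ht.2⟩
  refine ⟨ψ, hψ, hψmem, fun s hs => (hPρ _ (hψmem hs)).symm.trans (hPψ s hs), hψT,
    fun t ht g => ?_, ?_⟩
  · rw [← setIntegral_smul_eq_smul_setIntegral_comp hG0 hG.aemeasurable hψe hc (hmap t ht)]
    exact setIntegral_congr_fun measurableSet_Ioc fun x hx => by
      rw [hGρ ⟨hx.1.le, hx.2.trans (hψmem ht).2⟩]
  · filter_upwards [ae_restrict_Ioc_apply_ne_zero hG.aemeasurable hψe hc
      (hmap T (right_mem_Icc.2 hT)), ae_restrict_mem measurableSet_Ioc] with s hs hsI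
    rwa [← hGρ (hψmem ⟨hsI.1.le, hsI.2⟩)]

theorem setIntegral_eq_zero_of_support_subset {α E : Type*} [MeasurableSpace α]
    [NormedAddCommGroup E] [NormedSpace ℝ E] {μ : Measure α} {s : Set α} {f : α → ℝ} {g : α → E}
    (hf0 : ∀ x, 0 ≤ f x) (hf : IntegrableOn f s μ) (hgf : Function.support g ⊆ Function.support f)
    (h0 : ∫ x in s, f x ∂μ = 0) : ∫ x in s, g x ∂μ = 0 := by
  have hf_ae : f =ᵐ[μ.restrict s] 0 := (integral_eq_zero_iff_of_nonneg hf0 hf).1 h0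
  have hg_ae : g =ᵐ[μ.restrict s] 0 :=
    hf_ae.mono fun x hx => Function.notMem_support.1 fun hg => hgf hg hx
  simp [integral_congr_ae hg_ae]

section ControlSystem

variable {m : ℕ} {E : Type*} [NormedAddCommGroup E] [NormedSpace ℝ E]

theorem sqrt_sum_sq_eq_norm (v : Fin m → ℝ) : √(∑ i, v i ^ 2) = ‖WithLp.toLp 2 v‖ := by
  simp [EuclideanSpace.norm_eq]

theorem sum_smul_eq_zero_of_sqrt_sum_sq_eq_zero {v : Fin m → ℝ} (hv : √(∑ i, v i ^ 2) = 0)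
    (x : Fin m → E) : ∑ i, v i • x i = 0 := by
  rw [sqrt_sum_sq_eq_norm, norm_eq_zero, WithLp.toLp_eq_zero] at hv
  simp [hv]

theorem sqrt_sum_sq_div_smul {c : ℝ} (hc : 0 ≤ c) {v : Fin m → ℝ} (hv : √(∑ i, v i ^ 2) ≠ 0) :
    √(∑ i, ((c / √(∑ j, v j ^ 2)) • v) i ^ 2) = c := by
  rw [sqrt_sum_sq_eq_norm] at hv ⊢
  rw [sqrt_sum_sq_eq_norm, WithLp.toLp_smul, norm_smul, Real.norm_of_nonneg (by positivity),
    div_mul_cancel₀ c hv]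

theorem sqrt_sum_sq_div_smul_le {c : ℝ} (hc : 0 ≤ c) (v : Fin m → ℝ) :
    √(∑ i, ((c / √(∑ j, v j ^ 2)) • v) i ^ 2) ≤ c := by
  by_cases hv : √(∑ i, v i ^ 2) = 0
  · simp [hv, hc]
  · exact (sqrt_sum_sq_div_smul hc hv).le

theorem sum_smul_smul (a : ℝ) (v : Fin m → ℝ) (x : Fin m → E) :
    ∑ i, (a • v) i • x i = a • ∑ i, v i • x i := by
  simp [Finset.smul_sum, mul_smul]

variable {F : Fin m → E → E} {u : ℝ → Fin m → ℝ} {q : ℝ → E} {T : ℝ}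

theorem eq_of_cost_eq_zero
    (hq : ∀ t ∈ Icc 0 T, q t = q 0 + ∫ τ in (0:ℝ)..t, ∑ i, u τ i • F i (q τ))
    (huI : IntegrableOn (fun t => √(∑ i, u t i ^ 2)) (Icc 0 T)) {y : ℝ} (hy : y ∈ Icc 0 T)
    (h0 : ∫ t in 0..y, √(∑ i, u t i ^ 2) = 0) : q y = q 0 := by
  rw [intervalIntegral.integral_of_le hy.1] at h0
  rw [hq y hy, intervalIntegral.integral_of_le hy.1,
    setIntegral_eq_zero_of_support_subset (fun _ => sqrt_nonneg _)
      (huI.mono_set (Ioc_subset_Icc_self.trans (Icc_subset_Icc_right hy.2)))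
      (fun τ hw h0 => hw (sum_smul_eq_zero_of_sqrt_sum_sq_eq_zero h0 _)) h0, add_zero]

theorem eq_of_total_cost_eq_zero
    (hq : ∀ t ∈ Icc 0 T, q t = q 0 + ∫ τ in (0:ℝ)..t, ∑ i, u τ i • F i (q τ))
    (huI : IntegrableOn (fun t => √(∑ i, u t i ^ 2)) (Icc 0 T))
    (h0 : ∫ t in 0..T, √(∑ i, u t i ^ 2) = 0) {t : ℝ} (ht : t ∈ Icc 0 T) : q t = q 0 :=
  eq_of_cost_eq_zero hq huI ht <| le_antisymm
    ((intervalIntegral.integral_mono_interval le_rfl ht.1 ht.2 (ae_of_all _ fun _ => sqrt_nonneg _)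
      ((intervalIntegrable_iff_integrableOn_Icc_of_le (ht.1.trans ht.2)).2 huI)).trans h0.le)
    (intervalIntegral.integral_nonneg ht.1 fun _ _ => sqrt_nonneg _)

theorem integral_div_smul_velocity {ψ : ℝ → ℝ} {c t : ℝ} (ht : 0 ≤ t) (hψt : 0 ≤ ψ t)
    (hcov : ∀ g : ℝ → E, ∫ x in Ioc 0 (ψ t), √(∑ i, u x i ^ 2) • g x =
      c • ∫ s in Ioc 0 t, g (ψ s)) :
    ∫ s in 0..t, ∑ i, ((c / √(∑ j, u (ψ s) j ^ 2)) • u (ψ s)) i • F i (q (ψ s)) =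
      ∫ x in 0..ψ t, ∑ i, u x i • F i (q x) := by
  have hhw : ∀ x, √(∑ i, u x i ^ 2) • (√(∑ i, u x i ^ 2))⁻¹ • ∑ i, u x i • F i (q x) =
      ∑ i, u x i • F i (q x) := fun x => by
    by_cases hx : √(∑ i, u x i ^ 2) = 0
    · simp [hx, sum_smul_eq_zero_of_sqrt_sum_sq_eq_zero hx]
    · exact smul_inv_smul₀ hx _
  rw [intervalIntegral.integral_of_le ht, intervalIntegral.integral_of_le hψt]
  simp_rw [sum_smul_smul, div_eq_mul_inv, mul_smul]
  rw [integral_smul, ← hcov fun x => (√(∑ i, u x i ^ 2))⁻¹ • ∑ i, u x i • F i (q x)]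
  simp_rw [hhw]

theorem integral_sqrt_sum_sq_div_smul {ψ : ℝ → ℝ} {c : ℝ} (hc : 0 ≤ c) (hT : 0 ≤ T)
    (hne : ∀ᵐ s ∂volume.restrict (Ioc 0 T), √(∑ i, u (ψ s) i ^ 2) ≠ 0) :
    ∫ s in 0..T, √(∑ i, ((c / √(∑ j, u (ψ s) j ^ 2)) • u (ψ s)) i ^ 2) = c * T := by
  rw [intervalIntegral.integral_of_le hT, integral_congr_ae (hne.mono fun s hs =>
    sqrt_sum_sq_div_smul hc hs)]
  simp [hT, mul_comm]

end ControlSystem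

/-- Reduction from L¹ to L^∞ controls: if a trajectory of q' = Σ uᵢ Fᵢ(q) with
controls in a cone V and L¹ norm-cost L joins q₀ to q₁, then a reparametrization of
it joins q₀ to q₁ on [0,T] with controls in V bounded in norm by L/T and the same
cost L. -/
theorem stmt_17 {E : Type*} [NormedAddCommGroup E] [NormedSpace ℝ E]
    (m : ℕ) (V : Set (Fin m → ℝ))
    (hV : ∀ a : ℝ, 0 ≤ a → ∀ v ∈ V, a • v ∈ V)
    (F : Fin m → E → E) (T : ℝ) (hT : 0 < T)
    (u : ℝ → Fin m → ℝ)
    (huV : ∀ t ∈ Icc 0 T, u t ∈ V)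
    (huI : IntegrableOn (fun t => Real.sqrt (∑ i, u t i ^ 2)) (Icc 0 T))
    (q : ℝ → E)
    (hq : ∀ t ∈ Icc 0 T,
      q t = q 0 + ∫ τ in (0:ℝ)..t, ∑ i, u τ i • F i (q τ))
    (L : ℝ) (hL : L = ∫ t in (0:ℝ)..T, Real.sqrt (∑ i, u t i ^ 2)) :
    ∃ (uh : ℝ → Fin m → ℝ) (qh : ℝ → E) (φ : ℝ → ℝ),
      MonotoneOn φ (Icc 0 T) ∧ MapsTo φ (Icc 0 T) (Icc 0 T) ∧
      (∀ t ∈ Icc 0 T, qh t = q (φ t)) ∧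
      qh 0 = q 0 ∧ qh T = q T ∧
      (∀ t ∈ Icc 0 T, uh t ∈ V) ∧
      (∀ᵐ t ∂(volume.restrict (Icc 0 T)), Real.sqrt (∑ i, uh t i ^ 2) ≤ L / T) ∧
      (∀ t ∈ Icc 0 T,
        qh t = qh 0 + ∫ τ in (0:ℝ)..t, ∑ i, uh τ i • F i (qh τ)) ∧
      (∫ t in (0:ℝ)..T, Real.sqrt (∑ i, uh t i ^ 2)) = L := by
  have hcost0 : ∀ t, 0 ≤ √(∑ i, u t i ^ 2) := fun _ => sqrt_nonneg _
  have hLnn : 0 ≤ L := hL ▸ intervalIntegral.integral_nonneg hT.le fun t _ => hcost0 t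
  have h0V : (0 : Fin m → ℝ) ∈ V := by simpa using hV 0 le_rfl _ (huV 0 ⟨le_rfl, hT.le⟩)
  obtain rfl | hLpos := hLnn.eq_or_lt
  · refine ⟨0, q, id, monotoneOn_id, mapsTo_id _, fun _ _ => rfl, rfl, rfl, fun _ _ => h0V,
      ae_of_all _ fun _ => by simp, fun t ht => ?_, by simp⟩
    simp [eq_of_total_cost_eq_zero hq huI hL.symm ht]
  set c := L / T
  have hcT : ∫ t in 0..T, √(∑ i, u t i ^ 2) = c * T := by rw [← hL, div_mul_cancel₀ L hT.ne']
  obtain ⟨ψ, hψ, hψmem, hcostψ, hψT, hcov, hne⟩ := exists_strictMono_reparam (E := E) hT.le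
    (div_pos hLpos hT) (fun t _ => hcost0 t) huI hcT
  have hqψ0 : q (ψ 0) = q 0 := eq_of_cost_eq_zero hq huI (hψmem (left_mem_Icc.2 hT.le))
    (by rw [hcostψ 0 ⟨le_rfl, hT.le⟩, mul_zero])
  -- where `u ∘ ψ` vanishes, the division by zero makes the new control vanish as well
  refine ⟨fun s => (c / √(∑ i, u (ψ s) i ^ 2)) • u (ψ s), q ∘ ψ, ψ, hψ.monotone.monotoneOn _,
    hψmem, fun _ _ => rfl, hqψ0, by simp [hψT],
    fun t ht => hV _ (by positivity) _ (huV _ (hψmem ht)),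
    ae_of_all _ fun s => sqrt_sum_sq_div_smul_le (by positivity) _, fun t ht => ?_, ?_⟩
  · rw [Function.comp_apply, Function.comp_apply, hqψ0, hq _ (hψmem ht)]
    exact congrArg _ (integral_div_smul_velocity ht.1 (hψmem ht).1 (hcov t ht)).symm
  · rw [integral_sqrt_sum_sq_div_smul (by positivity) hT.le hne, ← hcT, hL]
end
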